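/- For h ≥ 2, the set A_h consisting of all integers of the form ±((2h)^{4N} + (2h)^{N+j}) with N = 2^n, n ≥ 0, and 0 ≤ j ≤ N-1, satisfies property P(h). -/

import Mathlib

/-- `s` is a representation of `D` as a sum of `h` elements of `A` (as a multiset). -/
def IsRep (A : Set ℤ) (h : ℕ) (D : ℤ) (s : Multiset ℤ) : Prop :=
  Multiset.card s = h ∧ (∀ x ∈ s, x ∈ A) ∧ s.sum = D

/-- A core multiset for property `P(h)`: at most `h` elements of `A`, with the same
parity of cardinality as `h`, and with `aᵢ ≠ -aⱼ` for `i ≠ j`. -/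
def IsCore (A : Set ℤ) (h : ℕ) (c : Multiset ℤ) : Prop :=
  Multiset.card c ≤ h ∧ Multiset.card c % 2 = h % 2 ∧ (∀ x ∈ c, x ∈ A) ∧
    ∀ x ∈ c, -x ∉ c.erase x

/-- `s` is, up to permutation, the core `c` together with cancelling pairs `(u, -u)`
with `u ∈ A ∩ (-A)`. -/
def MatchesCore (A : Set ℤ) (c s : Multiset ℤ) : Prop :=
  ∃ p : Multiset ℤ, (∀ u ∈ p, u ∈ A ∧ -u ∈ A) ∧ s = c + p + p.map (fun u => -u)

/-- Property `P(h)`: every `D` in the `h`-fold sumset of `A` has a unique core, such that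
every representation of `D` as a sum of `h` elements of `A` is a permutation of the core
together with cancelling pairs `(u, -u)`, `u ∈ A ∩ (-A)`. -/
def PropertyP (A : Set ℤ) (h : ℕ) : Prop :=
  ∀ D : ℤ, (∃ s, IsRep A h D s) →
    ∃! c : Multiset ℤ, IsCore A h c ∧ ∀ s, IsRep A h D s → MatchesCore A c s

/-- `S` is a `B_h`-set: any two `h`-tuples of elements of `S` with equal sums are
permutations of each other. -/
def IsBhSet (S : Set ℤ) (h : ℕ) : Prop :=
  ∀ s t : Multiset ℤ, Multiset.card s = h → Multiset.card t = h →
    (∀ x ∈ s, x ∈ S) → (∀ x ∈ t, x ∈ S) → s.sum = t.sum → s = t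

/-!
Write `q = 2h` and index the elements by `l = N + j`, so that `b_l = q^(4N) + q^l` with
`q^(l+1) ∣ q^(4N)`: the `q`-adic valuation of `b_l` is exactly `l`. Every multiset of elements of
`A_h` is its core plus cancelling pairs, so it suffices that two cores with equal sums coincide.
Cancelling common elements, we may assume the cores are disjoint; then the core of the first
together with the negatives of the second is a multiset of at most `2h = q` elements of `±b_l`,
free of opposite pairs, with sum `0`. At its lowest level `l` only one of `±b_l` occurs, say with
multiplicity `k`, and reducing modulo `q^(l+1)` gives `q ∣ k`. Hence `k = q` and the multiset
consists of `q` copies of one nonzero element, whose sum is not `0`.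
-/

open Multiset

def CancelFree (c : Multiset ℤ) : Prop := ∀ x ∈ c, -x ∉ c.erase x

theorem CancelFree.erase {c : Multiset ℤ} (hc : CancelFree c) (z : ℤ) :
    CancelFree (c.erase z) := fun x hx hnx =>
  hc x (mem_of_mem_erase hx) (mem_of_le (by rw [erase_comm]; exact erase_le _ _) hnx)

theorem CancelFree.neg_notMem {c : Multiset ℤ} (hc : CancelFree c) {x : ℤ} (hx : x ∈ c)
    (hx0 : x ≠ 0) : -x ∉ c := fun hnx => hc x hx ((mem_erase_of_ne (by omega)).2 hnx)

theorem sum_add_add_map_neg (c p : Multiset ℤ) : (c + p + p.map (fun u => -u)).sum = c.sum := by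
  simp [sum_map_neg']

theorem card_add_add_map_neg (c p : Multiset ℤ) :
    card (c + p + p.map (fun u => -u)) = card c + 2 * card p := by
  simp; ring

theorem exists_cancelFree_eq_add_add_map_neg (s : Multiset ℤ) :
    ∃ c p : Multiset ℤ, CancelFree c ∧ s = c + p + p.map (fun u => -u) := by
  induction s using Multiset.strongInductionOn with
  | ih s ih =>
  by_cases hs : CancelFree s
  · exact ⟨s, 0, hs, by simp⟩
  obtain ⟨x, hx, hnx⟩ : ∃ x ∈ s, -x ∈ s.erase x := by simpa [CancelFree] using hs
  obtain ⟨c, p, hc, hs'⟩ := ih _ ((erase_lt.2 hnx).trans (erase_lt.2 hx))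
  refine ⟨c, x ::ₘ p, hc, ?_⟩
  rw [← cons_erase hx, ← cons_erase hnx, hs']
  simp [add_cons, cons_swap]

theorem propertyP_of_cancelFree_injOn_sum {A : Set ℤ} {h : ℕ}
    (hinj : ∀ c c' : Multiset ℤ, (∀ x ∈ c, x ∈ A) → (∀ x ∈ c', x ∈ A) → CancelFree c →
      CancelFree c' → card c ≤ h → card c' ≤ h → c.sum = c'.sum → c = c') :
    PropertyP A h := by
  rintro D ⟨s₀, hs₀card, hs₀A, hs₀sum⟩
  obtain ⟨c, p, hc, rfl⟩ := exists_cancelFree_eq_add_add_map_neg s₀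
  have hcA : ∀ x ∈ c, x ∈ A := fun x hx => hs₀A x (by simp [hx])
  have hcard := card_add_add_map_neg c p
  have hcsum : c.sum = D := by rw [← hs₀sum, sum_add_add_map_neg]
  refine ⟨c, ⟨⟨by omega, by omega, hcA, hc⟩, ?_⟩, ?_⟩
  · rintro s ⟨hscard, hsA, hssum⟩
    obtain ⟨c', p', hc', rfl⟩ := exists_cancelFree_eq_add_add_map_neg s
    have := card_add_add_map_neg c' p'
    have hc'c : c' = c := hinj c' c (fun x hx => hsA x (by simp [hx])) hcA hc' hc (by omega)
      (by omega) (by rw [hcsum, ← hssum, sum_add_add_map_neg])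
    refine ⟨p', fun u hu => ⟨hsA u (by simp [hu]), hsA (-u) (by simp [hu])⟩, by rw [hc'c]⟩
  · rintro c' ⟨⟨hc'card, -, hc'A, hc'⟩, hmatch⟩
    obtain ⟨p', -, hs₀⟩ := hmatch _ ⟨hs₀card, hs₀A, hs₀sum⟩
    exact hinj c' c hc'A hcA hc' hc hc'card (by omega)
      (by rw [← sum_add_add_map_neg c' p', ← hs₀, sum_add_add_map_neg])

theorem mem_map_neg_iff {c : Multiset ℤ} {x : ℤ} : x ∈ c.map (fun u => -u) ↔ -x ∈ c := by
  simp [neg_eq_iff_eq_neg]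

theorem neg_notMem_add_map_neg {c c' : Multiset ℤ} (hc : CancelFree c) (hc' : CancelFree c')
    (h0 : (0 : ℤ) ∉ c) (h0' : (0 : ℤ) ∉ c') (hdisj : ∀ z ∈ c, z ∉ c') :
    ∀ x ∈ c + c'.map (fun u => -u), -x ∉ c + c'.map (fun u => -u) := by
  intro x hx hnx
  have hx0 : x ≠ 0 := by rintro rfl; simp_all
  rw [mem_add, mem_map_neg_iff] at hx hnx
  rw [neg_neg] at hnx
  rcases hx with hx | hx <;> rcases hnx with hnx | hnx
  · exact hc.neg_notMem hx hx0 hnx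
  · exact hdisj x hx hnx
  · exact hdisj _ hnx hx
  · exact hc'.neg_notMem hx (neg_ne_zero.2 hx0) (by rwa [neg_neg])

theorem eq_of_cancelFree_of_sum_eq {A : Set ℤ} {k : ℕ} (hA : ∀ x ∈ A, -x ∈ A)
    (h0 : (0 : ℤ) ∉ A)
    (hzero : ∀ m : Multiset ℤ, (∀ x ∈ m, x ∈ A) → card m ≤ k → (∀ x ∈ m, -x ∉ m) →
      m.sum = 0 → m = 0)
    {c c' : Multiset ℤ} (hcA : ∀ x ∈ c, x ∈ A) (hc'A : ∀ x ∈ c', x ∈ A) (hc : CancelFree c)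
    (hc' : CancelFree c') (hk : card c + card c' ≤ k) (hsum : c.sum = c'.sum) : c = c' := by
  induction c using Multiset.strongInductionOn generalizing c' with
  | ih c ih =>
  by_cases hcommon : ∃ z ∈ c, z ∈ c'
  · obtain ⟨z, hz, hz'⟩ := hcommon
    have herase : c.erase z = c'.erase z := by
      refine ih _ (erase_lt.2 hz) (fun x hx => hcA x (mem_of_mem_erase hx))
        (fun x hx => hc'A x (mem_of_mem_erase hx)) (hc.erase z) (hc'.erase z) ?_ ?_
      · have := card_erase_add_one hz; have := card_erase_add_one hz'; omega
      · have := sum_erase hz; have := sum_erase hz'; omega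
    rw [← cons_erase hz, ← cons_erase hz', herase]
  push Not at hcommon
  have hm := hzero (c + c'.map (fun u => -u))
    (fun x hx => by
      rcases mem_add.1 hx with hx | hx
      · exact hcA x hx
      · simpa using hA _ (hc'A _ (mem_map_neg_iff.1 hx)))
    (by simpa using hk)
    (neg_notMem_add_map_neg hc hc' (fun h => h0 (hcA 0 h)) (fun h => h0 (hc'A 0 h)) hcommon)
    (by simp [sum_map_neg', hsum])
  rw [eq_zero_of_add_right hm, Multiset.map_eq_zero.1 (eq_zero_of_add_left hm)]

section Levels

variable {q : ℤ} {B : ℕ → ℤ}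

theorem ne_zero_of_pow_succ_dvd_sub_pow (hq : 1 < q) {b : ℤ} {l : ℕ}
    (hb : q ^ (l + 1) ∣ b - q ^ l) : b ≠ 0 := by
  rintro rfl
  have hle := Int.le_of_dvd (by positivity) (dvd_neg.1 (zero_sub (q ^ l) ▸ hb))
  exact hle.not_gt (pow_lt_pow_right₀ hq l.lt_succ_self)

theorem pow_succ_dvd_of_lt (hB : ∀ l, q ^ (l + 1) ∣ B l - q ^ l) {l l' : ℕ} (hl : l < l') :
    q ^ (l + 1) ∣ B l' := by
  have := (pow_dvd_pow q (by omega : l + 1 ≤ l' + 1)).trans (hB l')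
  simpa using dvd_add this (pow_dvd_pow q hl)

theorem exists_lowest_level (hB : ∀ l, q ^ (l + 1) ∣ B l - q ^ l) {m : Multiset ℤ}
    (hmB : ∀ x ∈ m, ∃ l, x = B l ∨ x = -B l) (hneg : ∀ x ∈ m, -x ∉ m) (hm : m ≠ 0) :
    ∃ l, ∃ x₀ ∈ m, (x₀ = B l ∨ x₀ = -B l) ∧ ∀ y ∈ m.filter (· ≠ x₀), q ^ (l + 1) ∣ y := by
  classical
  have hex : ∃ l, ∃ x ∈ m, x = B l ∨ x = -B l := by
    obtain ⟨x, hx⟩ := exists_mem_of_ne_zero hm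
    obtain ⟨l, hl⟩ := hmB x hx
    exact ⟨l, x, hx, hl⟩
  obtain ⟨l, ⟨x₀, hx₀, hx₀l⟩, hmin⟩ : ∃ l, (∃ x ∈ m, x = B l ∨ x = -B l) ∧
      ∀ l', (∃ x ∈ m, x = B l' ∨ x = -B l') → l ≤ l' :=
    ⟨Nat.find hex, Nat.find_spec hex, fun _ => Nat.find_min' hex⟩
  refine ⟨l, x₀, hx₀, hx₀l, fun y hy => ?_⟩
  rw [mem_filter] at hy
  obtain ⟨l', hl'⟩ := hmB y hy.1
  have hlt : l < l' := by
    refine (hmin l' ⟨y, hy.1, hl'⟩).lt_of_ne ?_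
    rintro rfl
    have : y = x₀ ∨ -y = x₀ := by omega
    exact this.elim hy.2 fun h => hneg y hy.1 (h ▸ hx₀)
  rcases hl' with rfl | rfl
  · exact pow_succ_dvd_of_lt hB hlt
  · exact (pow_succ_dvd_of_lt hB hlt).neg_right

theorem eq_zero_of_sum_eq_zero (hq : 1 < q) (hB : ∀ l, q ^ (l + 1) ∣ B l - q ^ l)
    {m : Multiset ℤ} (hmB : ∀ x ∈ m, ∃ l, x = B l ∨ x = -B l) (hcard : (card m : ℤ) ≤ q)
    (hneg : ∀ x ∈ m, -x ∉ m) (hsum : m.sum = 0) : m = 0 := by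
  by_contra hm
  obtain ⟨l, x₀, hx₀, hx₀l, hrest⟩ := exists_lowest_level hB hmB hneg hm
  have hsplit : m.sum = count x₀ m • x₀ + (m.filter (· ≠ x₀)).sum := by
    rw [← sum_replicate, ← filter_eq', ← sum_add, filter_add_not]
  have hx₀B : q ^ (l + 1) ∣ count x₀ m * B l := by
    have h := (dvd_sum hrest).neg_right
    rw [← eq_neg_of_add_eq_zero_left (hsplit ▸ hsum), nsmul_eq_mul] at h
    rcases hx₀l with rfl | rfl
    · exact h
    · simpa using h
  have hdvd : q ^ l * q ∣ q ^ l * count x₀ m := by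
    rw [← pow_succ, mul_comm]
    simpa [mul_sub] using dvd_sub hx₀B ((hB l).mul_left (count x₀ m))
  have hq_le := Int.le_of_dvd (by exact_mod_cast count_pos.2 hx₀)
    ((mul_dvd_mul_iff_left (pow_ne_zero l (by omega))).1 hdvd)
  have hall : count x₀ m = card m := by
    have := count_le_card x₀ m; omega
  rw [eq_replicate.2 ⟨rfl, fun x hx => (count_eq_card.1 hall x hx).symm⟩, sum_replicate,
    smul_eq_zero, card_eq_zero] at hsum
  refine hsum.elim hm fun hx₀0 => ne_zero_of_pow_succ_dvd_sub_pow hq (hB l) ?_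
  rcases hx₀l with rfl | h
  · exact hx₀0
  · omega

end Levels

/-- The element `q^(4N) + q^(N+j)`, `N = 2^n`, `j < N`, indexed by `l = N + j`; then
`N = 2^(log₂ l)`. -/
def levelTerm (q : ℤ) (l : ℕ) : ℤ := q ^ (4 * 2 ^ Nat.log 2 l) + q ^ l

theorem pow_succ_dvd_levelTerm_sub_pow (q : ℤ) (l : ℕ) :
    q ^ (l + 1) ∣ levelTerm q l - q ^ l := by
  have := Nat.lt_pow_succ_log_self one_lt_two l
  rw [pow_succ] at this
  rw [levelTerm, add_sub_cancel_right]
  exact pow_dvd_pow q (by omega)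

theorem levelTerm_two_pow_add (q : ℤ) {n j : ℕ} (hj : j < 2 ^ n) :
    levelTerm q (2 ^ n + j) = q ^ (4 * 2 ^ n) + q ^ (2 ^ n + j) := by
  rw [levelTerm, Nat.log_eq_of_pow_le_of_lt_pow (m := n) (by omega) (by rw [pow_succ]; omega)]

/-- For h ≥ 2, the set of all ±((2h)^(4N) + (2h)^(N+j)) with N = 2^n, n ≥ 0,
0 ≤ j ≤ N - 1, satisfies property P(h). -/
theorem statement17 (h : ℕ) (hh : 2 ≤ h) :
    PropertyP {x : ℤ | ∃ n j : ℕ, j < 2 ^ n ∧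
      (x = (2 * (h : ℤ)) ^ (4 * 2 ^ n) + (2 * (h : ℤ)) ^ (2 ^ n + j) ∨
        x = -((2 * (h : ℤ)) ^ (4 * 2 ^ n) + (2 * (h : ℤ)) ^ (2 ^ n + j)))} h := by
  set q : ℤ := 2 * h
  have hq : 1 < q := by omega
  set T : Set ℤ := {x | ∃ l, x = levelTerm q l ∨ x = -levelTerm q l}
  have hT : ∀ x ∈ T, -x ∈ T := fun x ⟨l, hl⟩ => ⟨l, by omega⟩
  have hT0 : (0 : ℤ) ∉ T := fun ⟨l, hl⟩ =>
    ne_zero_of_pow_succ_dvd_sub_pow hq (pow_succ_dvd_levelTerm_sub_pow q l) (by omega)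
  have hAT : ∀ x, (∃ n j : ℕ, j < 2 ^ n ∧ (x = q ^ (4 * 2 ^ n) + q ^ (2 ^ n + j) ∨
      x = -(q ^ (4 * 2 ^ n) + q ^ (2 ^ n + j)))) → x ∈ T := by
    rintro x ⟨n, j, hj, hx⟩
    exact ⟨2 ^ n + j, by rwa [levelTerm_two_pow_add q hj]⟩
  refine propertyP_of_cancelFree_injOn_sum fun c c' hcA hc'A hc hc' hch hc'h hsum =>
    eq_of_cancelFree_of_sum_eq hT hT0 (fun m hmT hmq hneg hmsum => ?_)
      (fun x hx => hAT x (hcA x hx)) (fun x hx => hAT x (hc'A x hx)) hc hc'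
      (by omega : card c + card c' ≤ 2 * h) hsum
  exact eq_zero_of_sum_eq_zero hq (pow_succ_dvd_levelTerm_sub_pow q) hmT (by omega) hneg hmsum
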